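/- For any row-stochastic matrix A ∈ ℝ^{n×n} and any x ∈ ℝ^n, v(Ax) ≤ τ(A)·v(x), where v(x) = max_i x_i - min_i x_i and τ is the coefficient of ergodicity. -/

import Mathlib

open MeasureTheory Filter

def IsStochastic {n : ℕ} (A : Matrix (Fin n) (Fin n) ℝ) : Prop :=
  (∀ i j, 0 ≤ A i j) ∧ ∀ i, ∑ j, A i j = 1

noncomputable def tau {n : ℕ} (A : Matrix (Fin n) (Fin n) ℝ) : ℝ :=
  1 - ⨅ p : Fin n × Fin n, ∑ s, min (A p.1 s) (A p.2 s)

def Scrambling {n : ℕ} (A : Matrix (Fin n) (Fin n) ℝ) : Prop :=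
  ∀ i j, ∃ s, 0 < A i s ∧ 0 < A j s

noncomputable def spread {n : ℕ} (x : Fin n → ℝ) : ℝ := (⨆ i, x i) - ⨅ i, x i

/-!
Write `c s = min (a_is, a_js)`. Both rows of `A` dominate `c`, and the excesses `a_is - c s`,
`a_js - c s` are nonnegative weights of the same total `1 - ∑ c s`. Hence the common part `∑ c s x_s`
cancels in `(Ax)_i - (Ax)_j`, and what remains is at most `(1 - ∑ c s)(max x - min x)`; taking `i, j`
where `Ax` is extremal bounds this total weight by `τ(A)`.
-/

open Matrix

theorem mulVec_sub_mulVec_le_one_sub_sum_min_mul {ι κ : Type*} [Fintype κ] (A : Matrix ι κ ℝ)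
    (hA : ∀ i, ∑ s, A i s = 1) {x : κ → ℝ} {m M : ℝ} (hm : ∀ s, m ≤ x s) (hM : ∀ s, x s ≤ M)
    (i j : ι) :
    (A *ᵥ x) i - (A *ᵥ x) j ≤ (1 - ∑ s, min (A i s) (A j s)) * (M - m) := by
  set c : κ → ℝ := fun s => min (A i s) (A j s)
  have sum_excess : ∀ k, ∑ s, (A k s - c s) = 1 - ∑ s, c s := fun k => by
    rw [Finset.sum_sub_distrib, hA]
  have upper : ∑ s, (A i s - c s) * x s ≤ (1 - ∑ s, c s) * M := by
    rw [← sum_excess, Finset.sum_mul]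
    exact Finset.sum_le_sum fun s _ =>
      mul_le_mul_of_nonneg_left (hM s) (sub_nonneg.2 (min_le_left _ _))
  have lower : (1 - ∑ s, c s) * m ≤ ∑ s, (A j s - c s) * x s := by
    rw [← sum_excess, Finset.sum_mul]
    exact Finset.sum_le_sum fun s _ =>
      mul_le_mul_of_nonneg_left (hm s) (sub_nonneg.2 (min_le_right _ _))
  have common_cancels : (A *ᵥ x) i - (A *ᵥ x) j
      = ∑ s, (A i s - c s) * x s - ∑ s, (A j s - c s) * x s := by
    simp only [mulVec, dotProduct, sub_mul, Finset.sum_sub_distrib]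
    ring
  rw [common_cancels, mul_sub]
  linarith

theorem one_sub_sum_min_le_tau {n : ℕ} (A : Matrix (Fin n) (Fin n) ℝ) (i j : Fin n) :
    1 - ∑ s, min (A i s) (A j s) ≤ tau A :=
  sub_le_sub_left
    (ciInf_le (Finite.bddBelow_range fun p : Fin n × Fin n => ∑ s, min (A p.1 s) (A p.2 s)) (i, j)) 1

theorem spread_nonneg {n : ℕ} (x : Fin n → ℝ) : 0 ≤ spread x := by
  rcases isEmpty_or_nonempty (Fin n) with _ | _
  · simp [spread]
  · exact sub_nonneg.2 (ciInf_le_ciSup (Finite.bddBelow_range x) (Finite.bddAbove_range x))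

theorem exists_spread_eq_sub {n : ℕ} [Nonempty (Fin n)] (x : Fin n → ℝ) :
    ∃ i j, spread x = x i - x j := by
  obtain ⟨i, hi⟩ := Finite.exists_max x
  obtain ⟨j, hj⟩ := Finite.exists_min x
  refine ⟨i, j, ?_⟩
  rw [spread, le_antisymm (ciSup_le hi) (le_ciSup (Finite.bddAbove_range x) i),
    le_antisymm (ciInf_le (Finite.bddBelow_range x) j) (le_ciInf hj)]

theorem spread_mulVec_le_tau_mul_general {n : ℕ} (A : Matrix (Fin n) (Fin n) ℝ)
    (hA : IsStochastic A) (x : Fin n → ℝ) :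
    spread (A.mulVec x) ≤ tau A * spread x := by
  rcases isEmpty_or_nonempty (Fin n) with _ | _
  · simp [spread] -- an empty `⨆` or `⨅` in `ℝ` is `0`, so both spreads vanish
  obtain ⟨i, j, hij⟩ := exists_spread_eq_sub (A *ᵥ x)
  calc spread (A *ᵥ x) = (A *ᵥ x) i - (A *ᵥ x) j := hij
    _ ≤ (1 - ∑ s, min (A i s) (A j s)) * spread x :=
      mulVec_sub_mulVec_le_one_sub_sum_min_mul A hA.2 (ciInf_le (Finite.bddBelow_range x))
        (le_ciSup (Finite.bddAbove_range x)) i j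
    _ ≤ tau A * spread x :=
      mul_le_mul_of_nonneg_right (one_sub_sum_min_le_tau A i j) (spread_nonneg x)

theorem spread_mulVec_le_tau_mul {n : ℕ} (hn : 0 < n) (A : Matrix (Fin n) (Fin n) ℝ)
    (hA : IsStochastic A) (x : Fin n → ℝ) :
    spread (A.mulVec x) ≤ tau A * spread x :=
  spread_mulVec_le_tau_mul_general A hA x
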